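/- Let N1 and N2 be tree-child phylogenetic networks on the same set S of taxa. Then the multisets Υ(N1) and Υ(N2) of equivalence classes of their nodes coincide if and only if N1 and N2 are isomorphic as S-DAGs. Equivalently, Nakhleh's dissimilarity m(N1,N2) = (1/2)|Υ(N1) △ Υ(N2)| vanishes if and only if N1 ≅ N2. -/

import Mathlib

open scoped Classical

/-- A finite directed acyclic graph whose leaves are (injectively) labeled in `S`. -/
structure LDag (S : Type) : Type 1 where
  V : Type
  fin : Fintype V
  adj : V → V → Prop
  acyclic : WellFounded (fun a b => adj b a)
  lab : V → S
  labInj : ∀ u v : V, (∀ w, ¬ adj u w) → (∀ w, ¬ adj v w) → lab u = lab v → u = v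

attribute [instance] LDag.fin

namespace LDag

variable {S : Type}

/-- A leaf is a node with no children. -/
def IsLeaf (N : LDag S) (v : N.V) : Prop := ∀ w, ¬ N.adj v w

/-- `v` is a descendant of `u` (every node is a descendant of itself). -/
def Desc (N : LDag S) (u v : N.V) : Prop := Relation.ReflTransGen N.adj u v

/-- The cluster of `u`: the set of labels of the leaves that are descendants of `u`. -/
def cluster (N : LDag S) (u : N.V) : Set S :=
  {s | ∃ v, N.Desc u v ∧ N.IsLeaf v ∧ N.lab v = s}

/-- A tree node: a node with at most one parent. -/
def TreeNode (N : LDag S) (v : N.V) : Prop :=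
  ∀ p q, N.adj p v → N.adj q v → p = q

/-- A root: a node with no parents. -/
def IsRoot (N : LDag S) (r : N.V) : Prop := ∀ u, ¬ N.adj u r

/-- Tree-child: every internal node has a child that is a tree node. -/
def TreeChild (N : LDag S) : Prop :=
  ∀ v, ¬ N.IsLeaf v → ∃ w, N.adj v w ∧ N.TreeNode w

/-- `PathN N u v k`: there is a directed path of length `k` from `u` to `v`. -/
inductive PathN (N : LDag S) : N.V → N.V → ℕ → Prop
  | refl (v : N.V) : PathN N v v 0
  | cons {u v w : N.V} {k : ℕ} : N.adj u v → PathN N v w k → PathN N u w (k + 1)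

/-- The height of a node: the largest length of a directed path from it to a leaf. -/
noncomputable def height (N : LDag S) (v : N.V) : ℕ :=
  sSup {k | ∃ s, N.IsLeaf s ∧ PathN N v s k}

/-- Node equivalence between (possibly equal) labeled DAGs, defined recursively:
two leaves with the same label are equivalent, and two internal nodes are equivalent
when their children can be matched into equivalent pairs. -/
noncomputable def equivTo (N1 N2 : LDag S) : N1.V → N2.V → Prop :=
  N1.acyclic.fix (fun u ih v =>
    (N1.IsLeaf u ∧ N2.IsLeaf v ∧ N1.lab u = N2.lab v) ∨
    (¬ N1.IsLeaf u ∧ ¬ N2.IsLeaf v ∧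
      ∃ f : {w // N1.adj u w} ≃ {w // N2.adj v w},
        ∀ w : {w // N1.adj u w}, ih w.1 w.2 (f w).1))

end LDag

/-- Pre-nested labels: finitely branching trees of labels (multisets are obtained
as a quotient by `NEq` below). -/
inductive PreNested (S : Type) : Type
  | leaf : S → PreNested S
  | node : List (PreNested S) → PreNested S

/-- Equality of pre-nested labels as nested multisets. -/
inductive NEq {S : Type} : PreNested S → PreNested S → Prop
  | leaf (a : S) : NEq (.leaf a) (.leaf a)
  | node {l m : List (PreNested S)} : List.Forall₂ NEq l m → NEq (.node l) (.node m)
  | perm {l m : List (PreNested S)} : l.Perm m → NEq (.node l) (.node m)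
  | symm {a b : PreNested S} : NEq a b → NEq b a
  | trans {a b c : PreNested S} : NEq a b → NEq b c → NEq a c

mutual
  theorem NEq.refl {S : Type} : ∀ a : PreNested S, NEq a a
    | .leaf s => .leaf s
    | .node l => .node (NEq.reflL l)
  theorem NEq.reflL {S : Type} : ∀ l : List (PreNested S), List.Forall₂ NEq l l
    | [] => .nil
    | a :: l => .cons (NEq.refl a) (NEq.reflL l)
end

instance PreNested.setoid (S : Type) : Setoid (PreNested S) :=
  ⟨NEq, ⟨NEq.refl, fun h => h.symm, fun h1 h2 => h1.trans h2⟩⟩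

/-- Nested multisets (of multisets of ...) of labels. -/
def Nested (S : Type) : Type := Quotient (PreNested.setoid S)

/-- `TaxaIn s p`: the taxon `s` occurs somewhere (at any nesting depth) in `p`. -/
inductive TaxaIn {S : Type} : S → PreNested S → Prop
  | leaf (s : S) : TaxaIn s (.leaf s)
  | node {s : S} {p : PreNested S} {l : List (PreNested S)} :
      p ∈ l → TaxaIn s p → TaxaIn s (.node l)

mutual
  /-- Nesting depth of a pre-nested label: a singleton `{s}` has depth 1. -/
  def depthP {S : Type} : PreNested S → ℕ
    | .leaf _ => 1
    | .node l => depthL l + 1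
  def depthL {S : Type} : List (PreNested S) → ℕ
    | [] => 0
    | p :: ps => max (depthP p) (depthL ps)
end

namespace LDag

variable {S : Type}

/-- The nested label of a node: the singleton of its label for a leaf, and the
multiset of the nested labels of its children otherwise. -/
noncomputable def nested (N : LDag S) : N.V → Nested S :=
  N.acyclic.fix (fun v ih =>
    if h : N.IsLeaf v then (⟦PreNested.leaf (N.lab v)⟧ : Nested S)
    else ⟦PreNested.node (((Finset.univ.filter (fun w => N.adj v w)).attach.toList).map
        (fun w => (ih w.1 (Finset.mem_filter.mp w.2).2).out))⟧)

/-- `Υ(N)`: the multiset of equivalence classes (= nested labels) of the nodes of `N`,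
with multiplicities. -/
noncomputable def UpsilonM (N : LDag S) : Multiset (Nested S) :=
  Finset.univ.val.map N.nested

/-- Label-preserving isomorphisms of labeled DAGs. -/
structure Iso (N1 N2 : LDag S) where
  toEquiv : N1.V ≃ N2.V
  adj_iff : ∀ u v : N1.V, N2.adj (toEquiv u) (toEquiv v) ↔ N1.adj u v
  lab_leaf : ∀ v : N1.V, N1.IsLeaf v → N2.lab (toEquiv v) = N1.lab v

def IsIso (N1 N2 : LDag S) : Prop := Nonempty (Iso N1 N2)

theorem Iso.leaf_map {N1 N2 : LDag S} (e : Iso N1 N2) {v : N1.V} (h : N1.IsLeaf v) :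
    N2.IsLeaf (e.toEquiv v) := by
  intro w hw
  have hw' : N2.adj (e.toEquiv v) (e.toEquiv (e.toEquiv.symm w)) := by simpa using hw
  exact h _ ((e.adj_iff _ _).mp hw')

def Iso.refl (N : LDag S) : Iso N N :=
  ⟨Equiv.refl _, fun _ _ => Iff.rfl, fun _ _ => rfl⟩

def Iso.symm {N1 N2 : LDag S} (e : Iso N1 N2) : Iso N2 N1 where
  toEquiv := e.toEquiv.symm
  adj_iff u v := by rw [← e.adj_iff]; simp
  lab_leaf v hv := by
    have h1 : N1.IsLeaf (e.toEquiv.symm v) := by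
      intro w hw
      have : N2.adj v (e.toEquiv w) := by
        have := (e.adj_iff (e.toEquiv.symm v) w).mpr hw
        simpa using this
      exact hv _ this
    have := e.lab_leaf _ h1
    simpa using this.symm

def Iso.trans {N1 N2 N3 : LDag S} (e : Iso N1 N2) (f : Iso N2 N3) : Iso N1 N3 where
  toEquiv := e.toEquiv.trans f.toEquiv
  adj_iff u v := by
    simp only [Equiv.trans_apply]
    rw [f.adj_iff, e.adj_iff]
  lab_leaf v hv := by
    simp only [Equiv.trans_apply]
    rw [f.lab_leaf _ (e.leaf_map hv), e.lab_leaf _ hv]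

instance isoSetoid (S : Type) : Setoid (LDag S) :=
  ⟨IsIso, ⟨fun N => ⟨Iso.refl N⟩, fun ⟨e⟩ => ⟨e.symm⟩, fun ⟨e⟩ ⟨f⟩ => ⟨e.trans f⟩⟩⟩

/-- Isomorphism classes of labeled DAGs. -/
def IsoClass (S : Type) : Type 1 := Quotient (isoSetoid S)

/-- The rooted subnetwork `N(u)` generated by a node `u`: the induced subgraph on
the set of descendants of `u`. -/
noncomputable def subnet (N : LDag S) (u : N.V) : LDag S where
  V := {v // N.Desc u v}
  fin := Subtype.fintype _
  adj a b := N.adj a.1 b.1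
  acyclic := by
    have h : (fun (a b : {v // N.Desc u v}) => N.adj b.1 a.1) =
        InvImage (fun a b => N.adj b a) Subtype.val := rfl
    rw [h]
    exact InvImage.wf _ N.acyclic
  lab v := N.lab v.1
  labInj := by
    intro a b ha hb hlab
    apply Subtype.ext
    refine N.labInj a.1 b.1 ?_ ?_ hlab
    · intro w hw
      exact ha ⟨w, a.2.trans (Relation.ReflTransGen.single hw)⟩ hw
    · intro w hw
      exact hb ⟨w, b.2.trans (Relation.ReflTransGen.single hw)⟩ hw

/-- `Σ(N)`: the multiset of isomorphism classes of the rooted subnetworks generated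
by the nodes of `N`, with multiplicities. -/
noncomputable def SigmaM (N : LDag S) : Multiset (IsoClass S) :=
  Finset.univ.val.map (fun u => (Quotient.mk (isoSetoid S) (N.subnet u) : IsoClass S))

/-- Nakhleh's dissimilarity `m(N1,N2) = |Υ(N1) △ Υ(N2)| / 2`. -/
noncomputable def mDist (N1 N2 : LDag S) : ℝ :=
  (((N1.UpsilonM - N2.UpsilonM) + (N2.UpsilonM - N1.UpsilonM)).card : ℝ) / 2

/-- The distance `σ(N1,N2) = |Σ(N1) △ Σ(N2)| / 2`. -/
noncomputable def sigmaDist (N1 N2 : LDag S) : ℝ :=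
  (((N1.SigmaM - N2.SigmaM) + (N2.SigmaM - N1.SigmaM)).card : ℝ) / 2

end LDag

/-- An `S`-DAG: a labeled DAG whose leaves are bijectively labeled by `S`. -/
structure SDag (S : Type) extends LDag S where
  surjLab : ∀ s : S, ∃ v, toLDag.IsLeaf v ∧ toLDag.lab v = s

/-- A phylogenetic network on `S`: a rooted `S`-DAG. -/
structure PhyloNetwork (S : Type) extends SDag S where
  rooted : ∃! r, toLDag.IsRoot r

/-!
The nested label of a node of a tree-child network determines the node: if `u` and `x`
have the same label, then by induction a tree child `w` of `u` is also a child of `x`,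
and as `w` has a single parent, `x = u`. So when `Υ(N1) = Υ(N2)`, matching the nodes with
equal labels is a bijection, and it is an isomorphism because, labels being injective,
`u → w` is an arc exactly when the label of `w` is an element of the label of `u`.
-/

namespace Nested

variable {S : Type}

def mk (p : PreNested S) : Nested S := ⟦p⟧

theorem mk_out (x : Nested S) : mk x.out = x := Quotient.out_eq x

end Nested

namespace PreNested

variable {S : Type}

noncomputable def unfold : PreNested S → S ⊕ Multiset (Nested S)
  | .leaf s => .inl s
  | .node l => .inr (l.map Nested.mk)

theorem unfold_eq_of_nEq {a b : PreNested S} (h : NEq a b) : a.unfold = b.unfold := by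
  refine @NEq.rec S (fun a b _ => a.unfold = b.unfold)
    (fun l m _ => l.map Nested.mk = m.map Nested.mk)
    (fun _ => rfl) ?_ ?_ (fun _ ih => ih.symm) (fun _ _ ih1 ih2 => ih1.trans ih2)
    rfl ?_ a b h
  · intro l m _ ih
    exact congrArg (fun l : List (Nested S) => Sum.inr (l : Multiset (Nested S))) ih
  · intro l m hp
    exact congrArg Sum.inr (Quot.sound (hp.map _))
  · intro a b l m hab _ _ ih
    exact congrArg₂ List.cons (Quot.sound hab) ih

theorem nEq_node_map_out (l : List (PreNested S)) :
    NEq (.node l) (.node ((l.map Nested.mk).map Quotient.out)) := by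
  refine .node (List.forall₂_map_right_iff.mpr (List.forall₂_map_right_iff.mpr ?_))
  exact List.forall₂_same.mpr fun a _ => (Quotient.mk_out (s := PreNested.setoid S) a).symm

end PreNested

namespace Nested

variable {S : Type}

/-- A nested label is either a singleton `{s}` (`inl s`) or the multiset of its elements. -/
noncomputable def unfold : Nested S → S ⊕ Multiset (Nested S) :=
  Quotient.lift PreNested.unfold fun _ _ => PreNested.unfold_eq_of_nEq

theorem unfold_injective : Function.Injective (unfold (S := S)) := by
  rintro ⟨p⟩ ⟨q⟩ h
  cases p with
  | leaf s =>
    cases q with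
    | leaf t => cases h; rfl
    | node m => cases h
  | node l =>
    cases q with
    | leaf t => cases h
    | node m =>
      -- choosing a representative of the class of every entry turns `l` and `m` into
      -- permutations of each other
      have hperm := Multiset.coe_eq_coe.mp (Sum.inr_injective h)
      have hout := NEq.perm (hperm.map Quotient.out)
      exact Quot.sound ((PreNested.nEq_node_map_out l).trans
        (hout.trans (PreNested.nEq_node_map_out m).symm))

noncomputable def children (x : Nested S) : Multiset (Nested S) :=
  x.unfold.elim (fun _ => 0) id

end Nested

namespace LDag

variable {S : Type}

theorem nested_eq (N : LDag S) (v : N.V) :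
    N.nested v = if N.IsLeaf v then (⟦PreNested.leaf (N.lab v)⟧ : Nested S)
      else ⟦PreNested.node (((Finset.univ.filter (fun w => N.adj v w)).attach.toList).map
          (fun w => (N.nested w.1).out))⟧ := by
  show WellFounded.fix _ _ v = _
  rw [WellFounded.fix_eq]
  by_cases hv : N.IsLeaf v
  · rw [if_pos hv]
    exact dif_pos hv
  · rw [if_neg hv]
    exact dif_neg hv

theorem unfold_nested (N : LDag S) (v : N.V) :
    (N.nested v).unfold = if N.IsLeaf v then .inl (N.lab v)
      else .inr ((Finset.univ.filter (N.adj v)).val.map N.nested) := by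
  rw [nested_eq]
  split_ifs
  · rfl
  · simp only [Nested.unfold, Quotient.lift_mk, PreNested.unfold, List.map_map]
    have hout : (Nested.mk ∘ fun w : {w // w ∈ Finset.univ.filter (N.adj v)} =>
        (N.nested w.1).out) = fun w => N.nested w.1 := funext fun w => Nested.mk_out _
    rw [hout, ← Multiset.map_coe, Finset.coe_toList, Finset.attach_val]
    exact congrArg Sum.inr (Multiset.attach_map_val' _ _)

theorem children_nested (N : LDag S) (v : N.V) :
    (N.nested v).children = (Finset.univ.filter (N.adj v)).val.map N.nested := by
  rw [Nested.children, unfold_nested]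
  split_ifs with hv
  · rw [Finset.filter_false_of_mem fun w _ => hv w]
    rfl
  · rfl

theorem mem_children_nested {N : LDag S} {u : N.V} {x : Nested S} :
    x ∈ (N.nested u).children ↔ ∃ w, N.adj u w ∧ N.nested w = x := by
  simp [children_nested]

theorem isLeaf_iff_of_nested_eq {N1 N2 : LDag S} {u : N1.V} {v : N2.V}
    (h : N1.nested u = N2.nested v) : N1.IsLeaf u ↔ N2.IsLeaf v := by
  have h' := congrArg Nested.unfold h
  rw [unfold_nested, unfold_nested] at h'
  split_ifs at h' with hu hv hv <;> simp_all

theorem lab_eq_of_nested_eq {N1 N2 : LDag S} {u : N1.V} {v : N2.V}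
    (h : N1.nested u = N2.nested v) (hu : N1.IsLeaf u) : N1.lab u = N2.lab v := by
  have h' := congrArg Nested.unfold h
  rw [unfold_nested, unfold_nested, if_pos hu, if_pos ((isLeaf_iff_of_nested_eq h).mp hu)] at h'
  exact Sum.inl_injective h'

theorem adj_iff_mem_children {N : LDag S} (hinj : Function.Injective N.nested) {u w : N.V} :
    N.adj u w ↔ N.nested w ∈ (N.nested u).children := by
  rw [mem_children_nested]
  exact ⟨fun h => ⟨w, h, rfl⟩, fun ⟨y, hy, hyw⟩ => hinj hyw ▸ hy⟩

theorem nested_injective {N : LDag S} (hN : N.TreeChild) : Function.Injective N.nested := by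
  intro u
  induction u using N.acyclic.induction with
  | _ u ih =>
  intro x hx
  by_cases hu : N.IsLeaf u
  · exact N.labInj u x hu ((isLeaf_iff_of_nested_eq hx).mp hu) (lab_eq_of_nested_eq hx hu)
  · obtain ⟨w, huw, hw⟩ := hN u hu
    have hw_mem : N.nested w ∈ (N.nested x).children :=
      hx ▸ mem_children_nested.mpr ⟨w, huw, rfl⟩
    obtain ⟨y, hxy, hyw⟩ := mem_children_nested.mp hw_mem
    exact hw u x huw (ih w huw hyw.symm ▸ hxy)

theorem mem_upsilonM {N : LDag S} {x : Nested S} :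
    x ∈ N.UpsilonM ↔ x ∈ Set.range N.nested := by
  simp [UpsilonM]

namespace Iso

variable {N1 N2 : LDag S}

theorem isLeaf_apply_iff (e : Iso N1 N2) {v : N1.V} : N2.IsLeaf (e.toEquiv v) ↔ N1.IsLeaf v :=
  ⟨fun h => by simpa [Iso.symm] using e.symm.leaf_map h, e.leaf_map⟩

theorem nested_apply (e : Iso N1 N2) (u : N1.V) : N2.nested (e.toEquiv u) = N1.nested u := by
  induction u using N1.acyclic.induction with
  | _ u ih =>
  apply Nested.unfold_injective
  rw [unfold_nested, unfold_nested, e.isLeaf_apply_iff]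
  split_ifs with hu
  · rw [e.lab_leaf u hu]
  · congr 1
    calc (Finset.univ.filter (N2.adj (e.toEquiv u))).val.map N2.nested
        = (Finset.univ.filter (N1.adj u)).val.map (N2.nested ∘ e.toEquiv) := by
          rw [Finset.filter_val, Finset.filter_val, ← Multiset.map_univ_val_equiv e.toEquiv,
            Multiset.filter_map, Multiset.map_map]
          congr 1
          exact Multiset.filter_congr fun w _ => e.adj_iff u w
      _ = (Finset.univ.filter (N1.adj u)).val.map N1.nested :=
          Multiset.map_congr rfl fun w hw => ih w (Finset.mem_filter.mp hw).2

theorem upsilonM_eq (e : Iso N1 N2) : N1.UpsilonM = N2.UpsilonM := by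
  rw [UpsilonM, UpsilonM, ← Multiset.map_univ_val_equiv e.toEquiv, Multiset.map_map]
  exact Multiset.map_congr rfl fun u _ => (e.nested_apply u).symm

def ofNestedEquiv (e : N1.V ≃ N2.V) (he : ∀ u, N2.nested (e u) = N1.nested u)
    (h1 : Function.Injective N1.nested) (h2 : Function.Injective N2.nested) : Iso N1 N2 where
  toEquiv := e
  adj_iff u w := by rw [adj_iff_mem_children h1, adj_iff_mem_children h2, he, he]
  lab_leaf v hv := (lab_eq_of_nested_eq (he v).symm hv).symm

end Iso

theorem isIso_of_upsilonM_eq {N1 N2 : LDag S} (h1 : Function.Injective N1.nested)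
    (h2 : Function.Injective N2.nested) (hU : N1.UpsilonM = N2.UpsilonM) : N1.IsIso N2 := by
  have hrange : Set.range N1.nested = Set.range N2.nested :=
    Set.ext fun x => by rw [← mem_upsilonM, ← mem_upsilonM, hU]
  let e := (Equiv.ofInjective _ h1).trans
    ((Equiv.setCongr hrange).trans (Equiv.ofInjective _ h2).symm)
  exact ⟨.ofNestedEquiv e (fun u => Equiv.apply_ofInjective_symm h2 _) h1 h2⟩

theorem mDist_eq_zero_iff (N1 N2 : LDag S) : N1.mDist N2 = 0 ↔ N1.UpsilonM = N2.UpsilonM := by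
  rw [mDist, div_eq_zero_iff, Nat.cast_eq_zero, Multiset.card_eq_zero, add_eq_zero,
    tsub_eq_zero_iff_le, tsub_eq_zero_iff_le, ← le_antisymm_iff]
  norm_num

end LDag

/-- For tree-child phylogenetic networks on the same taxon set, `Υ(N1) = Υ(N2)` iff
`N1 ≅ N2`; equivalently, Nakhleh's dissimilarity `m(N1,N2)` vanishes iff `N1 ≅ N2`. -/
theorem treechild_upsilon_separates {S : Type} (N1 N2 : PhyloNetwork S)
    (h1 : N1.toLDag.TreeChild) (h2 : N2.toLDag.TreeChild) :
    (N1.toLDag.UpsilonM = N2.toLDag.UpsilonM ↔ N1.toLDag.IsIso N2.toLDag) ∧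
    (N1.toLDag.mDist N2.toLDag = 0 ↔ N1.toLDag.IsIso N2.toLDag) := by
  have key : N1.toLDag.UpsilonM = N2.toLDag.UpsilonM ↔ N1.toLDag.IsIso N2.toLDag :=
    ⟨LDag.isIso_of_upsilonM_eq (LDag.nested_injective h1) (LDag.nested_injective h2),
      fun ⟨e⟩ => e.upsilonM_eq⟩
  exact ⟨key, (LDag.mDist_eq_zero_iff _ _).trans key⟩
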